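/- Let n, N ∈ ℕ and a_1, …, a_{3n} ∈ ℕ satisfy N/4 < a_i < N/2 for all i and Σ_{i=1}^{3n} a_i = nN, and let v, w be the associated words over 𝒜 = {a,b,c,d}. Then ν(v) = 13n − nN, ν(w) = −5n − nN, and hence ν(v) − ν(w) = 18n. -/

import Mathlib

/-- Two positive words are related if they contain the same number of each letter. -/
def Related {A : Type*} [DecidableEq A] (v w : List A) : Prop :=
  ∀ a : A, v.count a = w.count a

/-- `w` is a cyclic block interchange of `v`. -/
def IsCBI {A : Type*} (v w : List A) : Prop :=
  ∃ v' w' : List A, List.IsRotated v' v ∧ List.IsRotated w' w ∧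
    ∃ w1 w2 w3 w4 : List A, v' = w1 ++ w2 ++ w3 ++ w4 ∧ w' = w1 ++ w4 ++ w3 ++ w2

open Classical in
/-- The cyclic block interchange distance between two related words. -/
noncomputable def dcbi {A : Type*} (v w : List A) : ℕ :=
  if List.IsRotated v w then 0
  else sInf {k | ∃ z : ℕ → List A, z 0 = v ∧ z k = w ∧ ∀ i < k, IsCBI (z i) (z (i + 1))}

/-- The four-letter alphabet `𝒜 = {a,b,c,d}`. -/
inductive Letter where
  | a | b | c | d
deriving DecidableEq

open Letter

/-- The word `v = a^(n+1) (b c^(a₁) d)(b c^(a₂) d) ⋯ (b c^(a_{3n}) d) b`. -/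
def vWord (n : ℕ) (f : Fin (3 * n) → ℕ) : List Letter :=
  List.replicate (n + 1) a ++
    (List.ofFn fun i : Fin (3 * n) => b :: (List.replicate (f i) c ++ [d])).flatten ++ [b]

/-- The word `w = (a c^N d³)^n a b^(3n+1)`. -/
def wWord (n N : ℕ) : List Letter :=
  (List.replicate n (a :: (List.replicate N c ++ [d, d, d]))).flatten ++
    a :: List.replicate (3 * n + 1) b

/-- The instance of 3-PARTITION given by `a₁, …, a_{3n}` and `N` is solvable:
`{1, …, 3n}` can be partitioned into `n` three-element sets, each summing to `N`. -/
def Solvable3Partition (n N : ℕ) (f : Fin (3 * n) → ℕ) : Prop :=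
  ∃ P : Fin n → Finset (Fin (3 * n)),
    (∀ j, (P j).card = 3) ∧ (∀ j, ∑ i ∈ P j, f i = N) ∧ (∀ i, ∃! j, i ∈ P j)

/-- `ν_{xy}(u)`: the number of occurrences of `xy` as a cyclic subword of `u`. -/
def nuPair (p q : Letter) (u : List Letter) : ℕ :=
  (List.range u.length).countP
    (fun i => decide (u[i]? = some p ∧ u[(i + 1) % u.length]? = some q))

/-- The function `ν = ν_{aa} + ν_{bc} + ν_{cd} + ν_{db} − ν_{ac} − ν_{cc} − ν_{dd} −
ν_{da} − ν_{bb}`. -/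
def nu (u : List Letter) : ℤ :=
  (nuPair a a u : ℤ) + nuPair b c u + nuPair c d u + nuPair d b u
    - nuPair a c u - nuPair c c u - nuPair d d u - nuPair d a u - nuPair b b u

/-!
ν is a sum of a weight `nuWeight x y` over the cyclic adjacencies `xy` of a word, i.e. the
weight of the closed walk through its letters. Cutting the walk after each occurrence of a fixed
letter splits this weight into a sum over blocks: `v` is `a · a^n b · ∏ᵢ (c^{aᵢ} d b)` followed by
the closing `a`, where each block `c^k d b` entered from `b` has weight `4 - k`; `w` is
`a · (c^N d³ a)^n · b^{3n+1}` followed by the closing `a`, where each block `c^N d³ a` entered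
from `a` has weight `-N - 2` and the tail contributes `-3n`.
-/

section walkWeight

variable {α M : Type*} [AddMonoid M] (W : α → α → M)

def walkWeight : α → List α → M
  | _, [] => 0
  | x, y :: t => W x y + walkWeight y t

@[simp] lemma walkWeight_nil (x : α) : walkWeight W x [] = 0 := rfl

@[simp] lemma walkWeight_cons (x y : α) (t : List α) :
    walkWeight W x (y :: t) = W x y + walkWeight W y t := rfl

lemma walkWeight_eq_sum_zip (x : α) (l : List α) :
    walkWeight W x l = (((x :: l).zip l).map fun p => W p.1 p.2).sum := by
  induction l generalizing x with
  | nil => simp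
  | cons y t ih => simp [ih]

lemma walkWeight_append_cons (x y : α) (s t : List α) :
    walkWeight W x (s ++ y :: t) = walkWeight W x (s ++ [y]) + walkWeight W y t := by
  induction s generalizing x with
  | nil => simp
  | cons z s ih => simp [ih, add_assoc]

lemma walkWeight_flatten_append (x : α) (L : List (List α)) (t : List α) :
    walkWeight W x ((L.map (· ++ [x])).flatten ++ t) =
      (L.map fun s => walkWeight W x (s ++ [x])).sum + walkWeight W x t := by
  induction L with
  | nil => simp
  | cons s L ih =>
    rw [List.map_cons, List.flatten_cons, List.append_assoc, List.append_assoc,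
      List.singleton_append, walkWeight_append_cons, ih, List.map_cons, List.sum_cons, add_assoc]

lemma walkWeight_replicate_append (x : α) (k : ℕ) (t : List α) :
    walkWeight W x (List.replicate k x ++ t) = k • W x x + walkWeight W x t := by
  induction k with
  | zero => simp
  | succ k ih =>
    rw [List.replicate_succ, List.cons_append, walkWeight_cons, ih, succ_nsmul', add_assoc]

end walkWeight

lemma List.flatten_map_cons_append {α : Type*} (x : α) (L : List (List α)) (t : List α) :
    (L.map (x :: ·)).flatten ++ x :: t = x :: ((L.map (· ++ [x])).flatten ++ t) := by
  induction L with
  | nil => rfl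
  | cons s L ih => simp [ih]

lemma List.map_getElem?_range {α : Type*} (l : List α) :
    (List.range l.length).map (l[·]?) = l.map some := by
  apply List.ext_getElem <;> simp

def nuWeight : Letter → Letter → ℤ
  | a, a | b, c | c, d | d, b => 1
  | a, c | c, c | d, d | d, a | b, b => -1
  | _, _ => 0

lemma nuPair_eq_count (p q : Letter) (u : List Letter) :
    nuPair p q u = (u.zip (u.rotate 1)).count (p, q) := by
  set l := u.zip (u.rotate 1) with hl
  have hlen : l.length = u.length := by simp [hl]
  rw [nuPair, List.count_eq_countP, ← hlen]
  calc _ = (List.range l.length).countP (fun i => l[i]? == some (p, q)) := by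
        refine List.countP_congr fun i hi => ?_
        have hi : i < u.length := by simpa [hlen] using hi
        have hi' : (i + 1) % u.length < u.length := Nat.mod_lt _ (by omega)
        simp [hl, hi, hi', List.getElem_rotate]
    _ = ((List.range l.length).map (l[·]?)).countP (· == some (p, q)) := by
        rw [List.countP_map]; rfl
    _ = l.countP (· == (p, q)) := by
        rw [List.map_getElem?_range, List.countP_map]; congr

lemma sum_map_nuWeight (l : List (Letter × Letter)) :
    (l.map fun pq => nuWeight pq.1 pq.2).sum =
      (l.count (a, a) : ℤ) + l.count (b, c) + l.count (c, d) + l.count (d, b)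
        - l.count (a, c) - l.count (c, c) - l.count (d, d) - l.count (d, a)
        - l.count (b, b) := by
  induction l with
  | nil => simp
  | cons pq l ih =>
    obtain ⟨x, y⟩ := pq
    rw [List.map_cons, List.sum_cons, ih]
    cases x <;> cases y <;> simp [nuWeight] <;> ring

lemma nu_cons (x : Letter) (t : List Letter) :
    nu (x :: t) = walkWeight nuWeight x (t ++ [x]) := by
  have hrot : (x :: t).rotate 1 = t ++ [x] := by simp
  have hzip : (x :: (t ++ [x])).zip (t ++ [x]) = (x :: t).zip (t ++ [x]) := by
    simpa using List.zip_append (r₁ := [x]) (r₂ := []) (l₁ := x :: t) (l₂ := t ++ [x]) (by simp)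
  rw [walkWeight_eq_sum_zip, hzip, ← hrot, sum_map_nuWeight, nu]
  simp only [nuPair_eq_count _ _ (x :: t)]

lemma walkWeight_nuWeight_vBlock {k : ℕ} (hk : 0 < k) :
    walkWeight nuWeight b (List.replicate k c ++ [d, b]) = 4 - k := by
  obtain ⟨k, rfl⟩ := Nat.exists_eq_add_one_of_ne_zero hk.ne'
  rw [List.replicate_succ, List.cons_append, walkWeight_cons, walkWeight_replicate_append]
  simp only [walkWeight_cons, walkWeight_nil, nuWeight, nsmul_eq_mul]
  push_cast
  ring

lemma walkWeight_nuWeight_wBlock {k : ℕ} (hk : 0 < k) :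
    walkWeight nuWeight a (List.replicate k c ++ [d, d, d, a]) = -k - 2 := by
  obtain ⟨k, rfl⟩ := Nat.exists_eq_add_one_of_ne_zero hk.ne'
  rw [List.replicate_succ, List.cons_append, walkWeight_cons, walkWeight_replicate_append]
  simp only [walkWeight_cons, walkWeight_nil, nuWeight, nsmul_eq_mul]
  push_cast
  ring

lemma nu_vWord (n : ℕ) (f : Fin (3 * n) → ℕ) (hf : ∀ i, 0 < f i) :
    nu (vWord n f) = 13 * n - ∑ i, (f i : ℤ) := by
  set L := List.ofFn fun i => List.replicate (f i) c ++ [d]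
  have hv : vWord n f = a :: (List.replicate n a ++ b :: (L.map (· ++ [b])).flatten) := by
    have hblocks : (List.ofFn fun i => b :: (List.replicate (f i) c ++ [d])) = L.map (b :: ·) := by
      simp [L, List.map_ofFn, Function.comp_def]
    simpa [vWord, List.replicate_succ, hblocks] using List.flatten_map_cons_append b L []
  rw [hv, nu_cons, List.append_assoc, List.cons_append, walkWeight_replicate_append,
    walkWeight_cons, walkWeight_flatten_append]
  simp only [L, List.map_ofFn, List.sum_ofFn, Function.comp_def, List.append_assoc,
    List.singleton_append, walkWeight_nuWeight_vBlock (hf _), Finset.sum_sub_distrib,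
    walkWeight_cons, walkWeight_nil, nuWeight, nsmul_eq_mul]
  rw [Finset.sum_const, Finset.card_univ, Fintype.card_fin, nsmul_eq_mul]
  push_cast
  ring

lemma nu_wWord (n N : ℕ) (hN : 0 < N) : nu (wWord n N) = -5 * n - n * N := by
  set body := List.replicate N c ++ [d, d, d]
  have hw : wWord n N = a :: (((List.replicate n body).map (· ++ [a])).flatten ++
      List.replicate (3 * n + 1) b) := by
    rw [wWord, ← List.flatten_map_cons_append, List.map_replicate]
  rw [hw, nu_cons, List.append_assoc, walkWeight_flatten_append, List.map_replicate,
    List.sum_replicate, List.replicate_succ, List.cons_append, walkWeight_cons,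
    walkWeight_replicate_append]
  simp only [body, List.append_assoc, List.cons_append, List.nil_append,
    walkWeight_nuWeight_wBlock hN, walkWeight_cons, walkWeight_nil, nuWeight, nsmul_eq_mul]
  push_cast
  ring

/-- For the associated words `v, w` of an instance of 3-PARTITION we have
`ν(v) = 13n − nN`, `ν(w) = −5n − nN`, and hence `ν(v) − ν(w) = 18n`. -/
theorem nu_of_associated_words (n N : ℕ) (f : Fin (3 * n) → ℕ)
    (hbound : ∀ i, N < 4 * f i ∧ 2 * f i < N) (hsum : ∑ i, f i = n * N) :
    nu (vWord n f) = 13 * (n : ℤ) - (n : ℤ) * N ∧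
    nu (wWord n N) = -5 * (n : ℤ) - (n : ℤ) * N ∧
    nu (vWord n f) - nu (wWord n N) = 18 * (n : ℤ) := by
  have hv : nu (vWord n f) = 13 * (n : ℤ) - (n : ℤ) * N := by
    rw [nu_vWord n f fun i => by have := (hbound i).1; omega]
    rw [show ∑ i, (f i : ℤ) = n * N by exact_mod_cast hsum]
  have hw : nu (wWord n N) = -5 * (n : ℤ) - (n : ℤ) * N := by
    rcases Nat.eq_zero_or_pos n with rfl | hn
    · simp [wWord, nu_cons, nuWeight]
    · exact nu_wWord n N (by have := (hbound ⟨0, by omega⟩).2; omega)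
  exact ⟨hv, hw, by rw [hv, hw]; ring⟩
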